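/- For the generalized Friedrichs model 𝒜_μ(k) = [[A₀₀(k), (μ/√2)A₀₁],[(μ/√2)A₀₁*, A₁₁(k)]] acting on ℂ ⊕ L²(T³), a number z ∉ [m(k), M(k)] is an eigenvalue of 𝒜_μ(k) if and only if Δ_μ(k; z) = 0, where Δ_μ(k;z) = w₁(k) − z − (μ²/2)∫_{T³} dt/(w₂(k,t) − z). -/

import Mathlib

/-!
For `z` off the range of `w`, the second row of `(A - z) (f₀, f₁) = 0` forces
`f₁ = -c f₀ (w - z)⁻¹`; substituting into the first row gives `f₀ Δ(z) = 0`, and `f₀ ≠ 0`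
since otherwise `f₁ = 0` too. Conversely, when `Δ(z) = 0` the vector `(1, -c (w - z)⁻¹)` is an
eigenvector; it lies in `L²` because `z` has positive distance from the range of `w` on the torus.
-/

open Real Set MeasureTheory

noncomputable def eps (k : Fin 3 → ℝ) : ℝ := ∑ i, (1 - Real.cos (k i))

def T3 : Set (Fin 3 → ℝ) := Set.univ.pi fun _ => Set.Ioc (-π) π

noncomputable def w2 (k p : Fin 3 → ℝ) : ℝ :=
  eps k + eps (fun i => (k i + p i) / 2) + eps p

noncomputable def mlow (k : Fin 3 → ℝ) : ℝ := sInf (w2 k '' T3)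

noncomputable def Mhigh (k : Fin 3 → ℝ) : ℝ := sSup (w2 k '' T3)

noncomputable def nu : Measure (Fin 3 → ℝ) := volume.restrict T3

/-- The Hilbert space ℂ ⊕ L²(T³) of the generalized Friedrichs model. -/
noncomputable abbrev HF := WithLp 2 (ℂ × Lp ℂ 2 nu)

section FriedrichsModel

variable {α : Type*} [MeasurableSpace α] {ν : Measure α}

def IsFriedrichsModel (a c : ℝ) (w : α → ℝ)
    (A : WithLp 2 (ℂ × Lp ℂ 2 ν) → WithLp 2 (ℂ × Lp ℂ 2 ν)) : Prop :=
  ∀ f, (A f).fst = (a : ℂ) * f.fst + (c : ℂ) * ∫ t, f.snd t ∂ν ∧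
    ((A f).snd : α → ℂ) =ᵐ[ν] fun p => (c : ℂ) * f.fst + (w p : ℂ) * f.snd p

variable (ν) in
noncomputable def friedrichsDet (a c : ℝ) (w : α → ℝ) (z : ℝ) : ℝ :=
  a - z - c ^ 2 * ∫ p, (w p - z)⁻¹ ∂ν

namespace IsFriedrichsModel

variable {a c z : ℝ} {w : α → ℝ} {A : WithLp 2 (ℂ × Lp ℂ 2 ν) → WithLp 2 (ℂ × Lp ℂ 2 ν)}

theorem snd_ae_eq_of_eigenvector (hA : IsFriedrichsModel a c w A) (hwz : ∀ᵐ p ∂ν, w p ≠ z)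
    {f : WithLp 2 (ℂ × Lp ℂ 2 ν)} (hf : A f = (z : ℂ) • f) :
    (f.snd : α → ℂ) =ᵐ[ν] fun p => -(c : ℂ) * f.fst * ((w p - z)⁻¹ : ℝ) := by
  have hsnd : (A f).snd = (z : ℂ) • f.snd := by rw [hf, WithLp.smul_snd]
  filter_upwards [(hA f).2, hsnd ▸ Lp.coeFn_smul (z : ℂ) f.snd, hwz] with p hAp hzp hp
  have hp' : (w p : ℂ) - z ≠ 0 := by exact_mod_cast sub_ne_zero.mpr hp
  rw [hzp, Pi.smul_apply, smul_eq_mul] at hAp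
  push_cast
  field_simp
  linear_combination -hAp

theorem fst_eq_of_eigenvector (hA : IsFriedrichsModel a c w A)
    {f : WithLp 2 (ℂ × Lp ℂ 2 ν)} (hf : A f = (z : ℂ) • f) :
    (z : ℂ) * f.fst = a * f.fst + c * ∫ t, f.snd t ∂ν := by
  rw [← (hA f).1, hf, WithLp.smul_fst, smul_eq_mul]

theorem friedrichsDet_eq_zero_of_eigenvector (hA : IsFriedrichsModel a c w A)
    (hwz : ∀ᵐ p ∂ν, w p ≠ z) {f : WithLp 2 (ℂ × Lp ℂ 2 ν)} (hf0 : f ≠ 0)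
    (hf : A f = (z : ℂ) • f) : friedrichsDet ν a c w z = 0 := by
  have hsnd := hA.snd_ae_eq_of_eigenvector hwz hf
  have hfst : f.fst ≠ 0 := by
    intro h0
    refine hf0 (WithLp.ofLp_injective 2 (Prod.ext h0 (Lp.eq_zero_iff_ae_eq_zero.mpr ?_)))
    filter_upwards [hsnd] with p hp
    simp [hp, h0]
  have hint : ∫ t, f.snd t ∂ν = -(c : ℂ) * f.fst * ((∫ p, (w p - z)⁻¹ ∂ν : ℝ) : ℂ) := by
    rw [integral_congr_ae hsnd, integral_const_mul, integral_complex_ofReal]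
  have key : f.fst * (friedrichsDet ν a c w z : ℂ) = 0 := by
    have := hA.fst_eq_of_eigenvector hf
    rw [hint] at this
    unfold friedrichsDet
    push_cast
    linear_combination -this
  exact_mod_cast (mul_eq_zero.mp key).resolve_left hfst

theorem exists_eigenvector_of_friedrichsDet_eq_zero (hA : IsFriedrichsModel a c w A)
    (hwz : ∀ᵐ p ∂ν, w p ≠ z) (hg : MemLp (fun p => (w p - z)⁻¹) 2 ν)
    (hΔ : friedrichsDet ν a c w z = 0) : ∃ f, f ≠ 0 ∧ A f = (z : ℂ) • f := by
  have hg' : MemLp (fun p => -(c : ℂ) * ((w p - z)⁻¹ : ℝ)) 2 ν := hg.ofReal.const_mul _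
  set f : WithLp 2 (ℂ × Lp ℂ 2 ν) := WithLp.toLp 2 (1, hg'.toLp _)
  have hint : ∫ t, f.snd t ∂ν = -(c : ℂ) * ((∫ p, (w p - z)⁻¹ ∂ν : ℝ) : ℂ) := by
    rw [WithLp.toLp_snd, integral_congr_ae hg'.coeFn_toLp, integral_const_mul,
      integral_complex_ofReal]
  refine ⟨f, fun h => one_ne_zero (congrArg WithLp.fst h),
    WithLp.ofLp_injective 2 (Prod.ext ?_ (Lp.ext ?_))⟩
  · change (A f).fst = ((z : ℂ) • f).fst
    rw [(hA f).1, hint, WithLp.smul_fst, WithLp.toLp_fst, smul_eq_mul]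
    unfold friedrichsDet at hΔ
    have hΔ' : ((a - z - c ^ 2 * ∫ p, (w p - z)⁻¹ ∂ν : ℝ) : ℂ) = 0 := by exact_mod_cast hΔ
    push_cast at hΔ'
    linear_combination hΔ'
  · change ((A f).snd : α → ℂ) =ᵐ[ν] (((z : ℂ) • f).snd : α → ℂ)
    rw [WithLp.smul_snd]
    filter_upwards [(hA f).2, Lp.coeFn_smul (z : ℂ) f.snd, hg'.coeFn_toLp, hwz]
      with p hAp hzp hfp hp
    have hp' : (w p : ℂ) - z ≠ 0 := by exact_mod_cast sub_ne_zero.mpr hp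
    rw [hAp, hzp, Pi.smul_apply, smul_eq_mul, WithLp.toLp_snd, hfp, WithLp.toLp_fst]
    push_cast
    field_simp
    ring

theorem hasEigenvalue_iff (hA : IsFriedrichsModel a c w A) (hwz : ∀ᵐ p ∂ν, w p ≠ z)
    (hg : MemLp (fun p => (w p - z)⁻¹) 2 ν) :
    (∃ f, f ≠ 0 ∧ A f = (z : ℂ) • f) ↔ friedrichsDet ν a c w z = 0 :=
  ⟨fun ⟨_, hf0, hf⟩ => hA.friedrichsDet_eq_zero_of_eigenvector hwz hf0 hf,
    hA.exists_eigenvector_of_friedrichsDet_eq_zero hwz hg⟩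

end IsFriedrichsModel

theorem memLp_inv_sub_of_le_abs_sub [IsFiniteMeasure ν] {w : α → ℝ} (hw : Measurable w)
    {z δ : ℝ} (hδ : 0 < δ) (hsep : ∀ᵐ p ∂ν, δ ≤ |w p - z|) (q : ENNReal) :
    MemLp (fun p => (w p - z)⁻¹) q ν :=
  .of_bound (hw.sub_const z).inv.aestronglyMeasurable δ⁻¹ <| hsep.mono fun p hp => by
    rw [norm_inv, Real.norm_eq_abs]
    exact inv_anti₀ hδ hp

end FriedrichsModel

lemma exists_pos_le_abs_sub_of_notMem_Icc {a b z : ℝ} (hz : z ∉ Icc a b) :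
    ∃ δ > 0, ∀ x ∈ Icc a b, δ ≤ |x - z| := by
  rcases not_and_or.mp (mt mem_Icc.mpr hz) with h | h
  · refine ⟨a - z, by linarith, fun x hx => ?_⟩
    rw [abs_of_pos (by linarith [hx.1])]
    linarith [hx.1]
  · refine ⟨z - b, by linarith, fun x hx => ?_⟩
    rw [abs_of_neg (by linarith [hx.2])]
    linarith [hx.2]

lemma eps_mem_Icc (k : Fin 3 → ℝ) : eps k ∈ Icc 0 6 := by
  refine ⟨Finset.sum_nonneg fun i _ => by linarith [cos_le_one (k i)], ?_⟩
  calc eps k ≤ ∑ _i : Fin 3, (2 : ℝ) :=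
        Finset.sum_le_sum fun i _ => by linarith [neg_one_le_cos (k i)]
    _ = 6 := by norm_num

lemma w2_mem_Icc (k : Fin 3 → ℝ) {p : Fin 3 → ℝ} (hp : p ∈ T3) :
    w2 k p ∈ Icc (mlow k) (Mhigh k) := by
  have hbounds : w2 k '' T3 ⊆ Icc (eps k) (eps k + 12) := by
    rintro _ ⟨q, -, rfl⟩
    have h₁ := eps_mem_Icc fun i => (k i + q i) / 2
    have h₂ := eps_mem_Icc q
    constructor <;> simp only [w2] <;> linarith [h₁.1, h₁.2, h₂.1, h₂.2]
  exact ⟨csInf_le (bddBelow_Icc.mono hbounds) ⟨p, hp, rfl⟩,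
    le_csSup (bddAbove_Icc.mono hbounds) ⟨p, hp, rfl⟩⟩

lemma continuous_w2 (k : Fin 3 → ℝ) : Continuous (w2 k) := by
  unfold w2 eps
  fun_prop

lemma measurableSet_T3 : MeasurableSet T3 :=
  .univ_pi fun _ => measurableSet_Ioc

instance : IsFiniteMeasure nu :=
  ⟨by simp only [nu, Measure.restrict_apply_univ, T3, Real.volume_pi_Ioc]
      exact ENNReal.prod_lt_top fun _ _ => ENNReal.ofReal_lt_top⟩

theorem stmt14_general (k : Fin 3 → ℝ) (μ γ z : ℝ)
    (hz : z ∉ Set.Icc (mlow k) (Mhigh k))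
    (A : HF →L[ℂ] HF)
    (hA : ∀ f : HF,
      (WithLp.equiv 2 _ (A f)).1 =
        ((eps k + γ : ℝ) : ℂ) * (WithLp.equiv 2 _ f).1 +
          ((μ / Real.sqrt 2 : ℝ) : ℂ) * ∫ t in T3, (WithLp.equiv 2 _ f).2 t ∧
      ((WithLp.equiv 2 _ (A f)).2 : (Fin 3 → ℝ) → ℂ) =ᵐ[nu]
        fun p => ((μ / Real.sqrt 2 : ℝ) : ℂ) * (WithLp.equiv 2 _ f).1 +
          (w2 k p : ℂ) * (WithLp.equiv 2 _ f).2 p) :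
    (∃ f : HF, f ≠ 0 ∧ A f = (z : ℂ) • f) ↔
      eps k + γ - z - μ ^ 2 / 2 * (∫ t in T3, (w2 k t - z)⁻¹) = 0 := by
  obtain ⟨δ, hδ, hsep⟩ := exists_pos_le_abs_sub_of_notMem_Icc hz
  have hsep_ae : ∀ᵐ p ∂nu, δ ≤ |w2 k p - z| :=
    (ae_restrict_mem measurableSet_T3).mono fun p hp => hsep _ (w2_mem_Icc k hp)
  have hwz : ∀ᵐ p ∂nu, w2 k p ≠ z := hsep_ae.mono fun p hp h => by
    rw [h, sub_self, abs_zero] at hp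
    exact hp.not_gt hδ
  have hc : (μ / √2) ^ 2 = μ ^ 2 / 2 := by rw [div_pow, sq_sqrt zero_le_two]
  rw [← hc]
  exact IsFriedrichsModel.hasEigenvalue_iff hA hwz
    (memLp_inv_sub_of_le_abs_sub (continuous_w2 k).measurable hδ hsep_ae 2)

theorem stmt14 (k : Fin 3 → ℝ) (μ γ z : ℝ) (hμ : 0 < μ)
    (hz : z ∉ Set.Icc (mlow k) (Mhigh k))
    (A : HF →L[ℂ] HF)
    (hA : ∀ f : HF,
      (WithLp.equiv 2 _ (A f)).1 =
        ((eps k + γ : ℝ) : ℂ) * (WithLp.equiv 2 _ f).1 +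
          ((μ / Real.sqrt 2 : ℝ) : ℂ) * ∫ t in T3, (WithLp.equiv 2 _ f).2 t ∧
      ((WithLp.equiv 2 _ (A f)).2 : (Fin 3 → ℝ) → ℂ) =ᵐ[nu]
        fun p => ((μ / Real.sqrt 2 : ℝ) : ℂ) * (WithLp.equiv 2 _ f).1 +
          (w2 k p : ℂ) * (WithLp.equiv 2 _ f).2 p) :
    (∃ f : HF, f ≠ 0 ∧ A f = (z : ℂ) • f) ↔
      eps k + γ - z - μ ^ 2 / 2 * (∫ t in T3, (w2 k t - z)⁻¹) = 0 :=
  stmt14_general k μ γ z hz A hA
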